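/- arXiv:1503.07434 — 2 statements merged into one kernel-verified Lean document; each statement's English description precedes it below -/
import Mathlib

section
/- The set B_{ℵ_0} is not a closed subset of ℝ. -/
open Set

/-- The value `∑ dᵢ / qⁱ` (i ≥ 1) of a digit sequence `d` in base `q`
(here `d i` is the digit `d_{i+1}` of the paper). -/
noncomputable def expVal (q : ℝ) (d : ℕ → ℕ) : ℝ := ∑' i : ℕ, (d i : ℝ) / q ^ (i + 1)

/-- The set of `q`-expansions of `x`: 0-1 digit sequences whose value in base `q` is `x`. -/
def expansions (q x : ℝ) : Set (ℕ → ℕ) := {d | (∀ i, d i ≤ 1) ∧ expVal q d = x}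

/-- The map `T_{q,s}(x) = qx - s`. -/
def Tmap (q : ℝ) (s : ℕ) (x : ℝ) : ℝ := q * x - s

/-- `T_{q,d₁⋯dₙ} = T_{q,d₁} ∘ ⋯ ∘ T_{q,dₙ}` (the identity for the empty word). -/
def Tword (q : ℝ) (w : List ℕ) (x : ℝ) : ℝ := w.foldr (fun s y => Tmap q s y) x

/-- The switch region `S_q = [1/q, 1/(q²-q)]`. -/
def switchRegion (q : ℝ) : Set ℝ := Set.Icc (1 / q) (1 / (q ^ 2 - q))

/-- `A₁(q)`: points of the switch region for which both `T_{q,0}(x)` and `T_{q,1}(x)`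
have finitely many `q`-expansions. -/
def A1set (q : ℝ) : Set ℝ :=
  {x ∈ switchRegion q | (expansions q (Tmap q 0 x)).Finite ∧ (expansions q (Tmap q 1 x)).Finite}

/-- `A₂(q)`: points of the switch region for which exactly one of `T_{q,0}(x)`, `T_{q,1}(x)`
has finitely many `q`-expansions. -/
def A2set (q : ℝ) : Set ℝ :=
  {x ∈ switchRegion q | Xor' (expansions q (Tmap q 0 x)).Finite (expansions q (Tmap q 1 x)).Finite}

/-- `A₃(q)`: points of the switch region for which both `T_{q,0}(x)` and `T_{q,1}(x)`
have infinitely many `q`-expansions. -/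
def A3set (q : ℝ) : Set ℝ :=
  {x ∈ switchRegion q | (expansions q (Tmap q 0 x)).Infinite ∧ (expansions q (Tmap q 1 x)).Infinite}

/-- `x` is a `q`-null infinite point: it has infinitely many `q`-expansions and every
branching point of `x` (an image `T_{q,d₁⋯dₙ}(x)` lying in `A₂(q) ∪ A₃(q)`) lies in `A₂(q)`. -/
def IsNullInfinite (q x : ℝ) : Prop :=
  (expansions q x).Infinite ∧
    ∀ w : List ℕ, (∀ s ∈ w, s ≤ 1) →
      Tword q w x ∈ A2set q ∪ A3set q → Tword q w x ∈ A2set q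

/-- The interval `J_q = [(q+q²)/(q⁴-1), (1+q³)/(q⁴-1)]`. -/
def Jset (q : ℝ) : Set ℝ := Set.Icc ((q + q ^ 2) / (q ^ 4 - 1)) ((1 + q ^ 3) / (q ^ 4 - 1))

/-- `B_m` (for a finite `m`): the set of `q ∈ (1,2)` such that some `x ∈ [0, 1/(q-1)]`
has exactly `m` different `q`-expansions. -/
def Bset (m : ℕ) : Set ℝ :=
  {q | q ∈ Set.Ioo (1 : ℝ) 2 ∧
    ∃ x ∈ Set.Icc (0 : ℝ) (1 / (q - 1)), Cardinal.mk ↥(expansions q x) = (m : Cardinal)}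

/-- `B_{ℵ₀}`: the set of `q ∈ (1,2)` such that some `x ∈ [0, 1/(q-1)]` has exactly
countably infinitely many different `q`-expansions. -/
def BalephSet : Set ℝ :=
  {q | q ∈ Set.Ioo (1 : ℝ) 2 ∧
    ∃ x ∈ Set.Icc (0 : ℝ) (1 / (q - 1)), Cardinal.mk ↥(expansions q x) = Cardinal.aleph0}

/-- `U_k`: the set of `x ∈ [0, 1/(q-1)]` having exactly `k` different `q`-expansions. -/
def Uset (q : ℝ) (k : ℕ) : Set ℝ :=
  {x ∈ Set.Icc (0 : ℝ) (1 / (q - 1)) | Cardinal.mk ↥(expansions q x) = (k : Cardinal)}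

/-- `ε_k = (01)^k (10)^∞`; in particular `eps 0 = (10)^∞`. -/
def eps (k : ℕ) : ℕ → ℕ := fun i => if i < 2 * k then i % 2 else (i - 2 * k + 1) % 2

/-- Prepend the digit `s`, repeated `m` times, to the digit sequence `d`. -/
def prep (s m : ℕ) (d : ℕ → ℕ) : ℕ → ℕ := fun i => if i < m then s else d (i - m)

/-- Reflection of a digit sequence: each digit `d` is replaced by `1 - d`. -/
def reflSeq (d : ℕ → ℕ) : ℕ → ℕ := fun i => 1 - d i

/-- Concatenation of a finite word with an infinite digit sequence. -/
def seqCat (w : List ℕ) (t : ℕ → ℕ) : ℕ → ℕ :=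
  fun i => if i < w.length then w.getD i 0 else t (i - w.length)

/-- The sets `E_m` of the paper: for odd `m` (`m = 1, 3`),
`E_m = ⋃_{k≥1} {(01^{m+1}ε_k)_q, (10^m ε_k)_q} \ {(10ε₁)_q}`; for even `m` (`m = 2, 4`),
`E_m = {(01^m(10)^∞)_q} ∪ ⋃_{k≥1} {(01^{m+1}ε_k)_q, (10^m ε_k)_q}`. -/
noncomputable def Eset (q : ℝ) (m : ℕ) : Set ℝ :=
  if m % 2 = 1 then
    (⋃ k : ℕ, {expVal q (prep 0 1 (prep 1 (m + 1) (eps (k + 1)))),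
               expVal q (prep 1 1 (prep 0 m (eps (k + 1))))}) \
      {expVal q (prep 1 1 (prep 0 1 (eps 1)))}
  else
    {expVal q (prep 0 1 (prep 1 m (eps 0)))} ∪
      ⋃ k : ℕ, {expVal q (prep 0 1 (prep 1 (m + 1) (eps (k + 1)))),
                expVal q (prep 1 1 (prep 0 m (eps (k + 1))))}

/-!
For `n ≥ 3` let `q ∈ [7/4, 2)` solve `q^n (2 - q) = 1`, i.e. `1 = (1^n 0^∞)_q`. As `q` exceeds
the golden ratio, every expansion of `(1^k 0^∞)_q` with `k ≥ 2` begins with the digit `1`;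
following this, an expansion of `1` is either `1^n 0^∞` or `1^(n-1) 0` followed by another
expansion of `1`. So the expansions of `1` are `(1^(n-1) 0)^k 1^n 0^∞` (`k ≥ 0`) and
`(1^(n-1) 0)^∞`, countably infinitely many, and `q ∈ B_ℵ₀`. Since `2 - q = q^(-n) → 0` while
`2 ∉ B_ℵ₀`, the set is not closed.
-/

open Function Cardinal

theorem iterate_apply_eq_of_lt {α : Type*} {f : (ℕ → α) → ℕ → α}
    (hf : ∀ d d' k, (∀ j < k, d j = d' j) → ∀ j < k + 1, f d j = f d' j) :
    ∀ k d d', ∀ j < k, f^[k] d j = f^[k] d' j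
  | 0, _, _, _, hj => absurd hj (Nat.not_lt_zero _)
  | k + 1, d, d', j, hj => by
    rw [iterate_succ_apply', iterate_succ_apply']
    exact hf _ _ k (iterate_apply_eq_of_lt hf k d d') j hj

namespace Set

variable {α : Type*}

theorem infinite_of_mapsTo_of_injOn {s : Set α} {f : α → α} (hmaps : MapsTo f s s)
    (hinj : InjOn f s) {a : α} (ha : a ∈ s) (hna : a ∉ f '' s) : s.Infinite := fun hfin =>
  hna (((hfin.injOn_iff_bijOn_of_mapsTo hmaps).1 hinj).surjOn ha)

/-- The elements of `s` not of the form `f^[k] t` can be unfolded as `f^[k] e` for every `k`;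
since `f` pushes agreement one index further, there is at most one such sequence. -/
theorem countable_of_subset_insert_image {s : Set (ℕ → α)} {f : (ℕ → α) → ℕ → α} {t : ℕ → α}
    (hf : ∀ d d' k, (∀ j < k, d j = d' j) → ∀ j < k + 1, f d j = f d' j)
    (hs : s ⊆ insert t (f '' s)) : s.Countable := by
  set u : Set (ℕ → α) := {d | ∀ k, ∃ e, d = f^[k] e}
  have hu : u.Subsingleton := fun d hd d' hd' => funext fun j => by
    obtain ⟨e, rfl⟩ := hd (j + 1)
    obtain ⟨e', rfl⟩ := hd' (j + 1)
    exact iterate_apply_eq_of_lt hf (j + 1) e e' j j.lt_succ_self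
  refine ((countable_range fun k => f^[k] t).union hu.countable).mono fun d hd => ?_
  by_cases hrange : d ∈ range fun k => f^[k] t
  · exact Or.inl hrange
  have unfold : ∀ k, ∃ e ∈ s, d = f^[k] e := by
    intro k
    induction k with
    | zero => exact ⟨d, hd, rfl⟩
    | succ k ih =>
      obtain ⟨e, he, rfl⟩ := ih
      rcases hs he with rfl | ⟨e', he', rfl⟩
      · exact absurd ⟨k, rfl⟩ hrange
      · exact ⟨e', he', (iterate_succ_apply f k e').symm⟩
  exact Or.inr fun k => (unfold k).imp fun _ he => he.2

theorem mk_eq_aleph0_of_eq_insert_image {s : Set (ℕ → α)} {f : (ℕ → α) → ℕ → α} {t : ℕ → α}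
    (hs : s = insert t (f '' s)) (hinj : Injective f) (ht : t ∉ range f)
    (hf : ∀ d d' k, (∀ j < k, d j = d' j) → ∀ j < k + 1, f d j = f d' j) : #s = ℵ₀ := by
  have hmaps : MapsTo f s s := fun d hd => hs ▸ Or.inr (mem_image_of_mem f hd)
  have hinf : s.Infinite := infinite_of_mapsTo_of_injOn hmaps hinj.injOn
    (hs ▸ mem_insert t _) fun ⟨d, _, hd⟩ => ht ⟨d, hd⟩
  have := (countable_of_subset_insert_image hf hs.subset).to_subtype
  have := hinf.to_subtype
  exact mk_eq_aleph0 s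

end Set

section Prep

variable {s a b i : ℕ} {d : ℕ → ℕ}

@[simp] theorem prep_apply_of_lt (h : i < a) : prep s a d i = s := if_pos h

@[simp] theorem prep_apply_add : prep s a d (i + a) = d i := by
  simp [prep]

@[simp] theorem prep_zero : prep s 0 d = d := rfl

theorem prep_prep : prep s a (prep s b d) = prep s (a + b) d := by
  funext i
  simp only [prep]
  split_ifs <;> first | rfl | omega | (congr 1; omega)

theorem prep_head_tail : prep (d 0) 1 (fun i => d (i + 1)) = d := by
  funext i
  cases i <;> simp [prep]

end Prep

section Expansions

variable {q x : ℝ} {s : ℕ} {d : ℕ → ℕ}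

theorem summable_digits (hq : 1 < q) (hd : ∀ i, d i ≤ 1) :
    Summable fun i => (d i : ℝ) / q ^ (i + 1) := by
  have hgeo : Summable fun i : ℕ => q⁻¹ * q⁻¹ ^ i :=
    (summable_geometric_of_lt_one (by positivity) (inv_lt_one_of_one_lt₀ hq)).mul_left _
  refine hgeo.of_nonneg_of_le (fun i => by positivity) fun i => ?_
  rw [← pow_succ', inv_pow, div_eq_mul_inv]
  exact mul_le_of_le_one_left (by positivity) (by exact_mod_cast hd i)

theorem expVal_le (hq : 1 < q) (hd : ∀ i, d i ≤ 1) : expVal q d ≤ 1 / (q - 1) := by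
  have hgeo : ∑' i : ℕ, q⁻¹ * q⁻¹ ^ i = 1 / (q - 1) := by
    rw [tsum_mul_left, tsum_geometric_of_lt_one (by positivity) (inv_lt_one_of_one_lt₀ hq)]
    field_simp [(by linarith : q - 1 ≠ 0)]
  rw [← hgeo]
  refine (summable_digits hq hd).tsum_le_tsum (fun i => ?_)
    ((summable_geometric_of_lt_one (by positivity) (inv_lt_one_of_one_lt₀ hq)).mul_left _)
  rw [← pow_succ', inv_pow, div_eq_mul_inv]
  exact mul_le_of_le_one_left (by positivity) (by exact_mod_cast hd i)

theorem expVal_prep_one (hq : 1 < q) (hd : ∀ i, d i ≤ 1) :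
    expVal q (prep s 1 d) = (s + expVal q d) / q := by
  have hshift : ∀ i, (prep s 1 d (i + 1) : ℝ) / q ^ (i + 1 + 1) = (d i : ℝ) / q ^ (i + 1) / q :=
    fun i => by rw [prep_apply_add, pow_succ, div_div]
  rw [expVal, tsum_eq_zero_add'
    (by simpa only [hshift] using (summable_digits hq hd).div_const q), expVal, add_div,
    ← tsum_div_const]
  simp only [hshift]
  simp

theorem prep_one_mem_expansions_iff (hq : 1 < q) (hs : s ≤ 1) :
    prep s 1 d ∈ expansions q x ↔ d ∈ expansions q (q * x - s) := by
  have hdigits : (∀ i, prep s 1 d i ≤ 1) ↔ ∀ i, d i ≤ 1 :=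
    ⟨fun h i => by simpa using h (i + 1), fun h i => by cases i <;> simp [prep, hs, h]⟩
  simp only [expansions, mem_ofPred_eq, hdigits]
  refine and_congr_right fun hd => ?_
  rw [expVal_prep_one hq hd, div_eq_iff (by positivity)]
  constructor <;> intro h <;> linarith

theorem mem_expansions_iff_prep (hq : 1 < q) :
    d ∈ expansions q x ↔ ∃ s : ℕ, s ≤ 1 ∧ ∃ e ∈ expansions q (q * x - s), d = prep s 1 e := by
  constructor
  · intro hd
    refine ⟨d 0, hd.1 0, _, ?_, prep_head_tail.symm⟩
    rw [← prep_one_mem_expansions_iff hq (hd.1 0), prep_head_tail]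
    exact hd
  · rintro ⟨s, hs, e, he, rfl⟩
    exact (prep_one_mem_expansions_iff hq hs).2 he

theorem expansions_zero (hq : 1 < q) : expansions q 0 = {0} := by
  ext d
  refine ⟨fun ⟨hd, hval⟩ => funext fun i => ?_, ?_⟩
  · have hsum := (summable_digits hq hd).hasSum
    rw [← expVal, hval] at hsum
    have hterms := (hasSum_zero_iff_of_nonneg fun i => by positivity).1 hsum
    have := congrFun hterms i
    simp only [Pi.zero_apply, div_eq_zero_iff, pow_eq_zero_iff', (zero_lt_one.trans hq).ne',
      false_and, or_false, Nat.cast_eq_zero] at this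
    exact this
  · rintro rfl
    exact ⟨fun _ => zero_le_one, by simp [expVal]⟩

theorem head_eq_one_of_lt (hq : 1 < q) (hx : 1 / (q ^ 2 - q) < x) (hd : d ∈ expansions q x) :
    d 0 = 1 := by
  obtain ⟨s, hs, e, he, rfl⟩ := (mem_expansions_iff_prep hq).1 hd
  obtain rfl | rfl : s = 0 ∨ s = 1 := by omega
  · have hval := he.2 ▸ expVal_le hq he.1
    rw [show 1 / (q ^ 2 - q) = 1 / (q - 1) / q by field_simp,
      div_lt_iff₀ (by linarith)] at hx
    push_cast at hval
    linarith
  · rfl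

end Expansions

/-- The value `(1^m 0^∞)_q = 1/q + ⋯ + 1/q^m`. -/
noncomputable def onesVal (q : ℝ) : ℕ → ℝ
  | 0 => 0
  | m + 1 => (1 + onesVal q m) / q

section Ones

variable {q : ℝ} {d : ℕ → ℕ}

theorem onesVal_mul_pow (hq : 0 < q) (m : ℕ) : onesVal q m * (q - 1) * q ^ m = q ^ m - 1 := by
  induction m with
  | zero => simp [onesVal]
  | succ m ih =>
    rw [onesVal, pow_succ, show (1 + onesVal q m) / q * (q - 1) * (q ^ m * q)
      = (1 + onesVal q m) * (q - 1) * q ^ m by field_simp]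
    linear_combination ih

theorem onesVal_eq_one_of_pow_mul (hq : 1 < q) {n : ℕ} (hroot : q ^ n * (2 - q) = 1) :
    onesVal q n = 1 := by
  have hmul := onesVal_mul_pow (zero_lt_one.trans hq) n
  have hne : (q - 1) * q ^ n ≠ 0 := mul_ne_zero (by linarith) (by positivity)
  apply mul_right_cancel₀ hne
  linear_combination hmul + hroot

theorem lt_onesVal (hq : 1 < q) (hφ : 1 < q ^ 2 - q) (m : ℕ) :
    1 / (q ^ 2 - q) < onesVal q (m + 2) := by
  have hq0 : 0 < q := zero_lt_one.trans hq
  induction m with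
  | zero =>
    simp only [onesVal, add_zero]
    rw [div_lt_div_iff₀ (by linarith) hq0]
    field_simp
    nlinarith
  | succ m ih =>
    have hpos : 0 < q ^ 2 - q := by linarith
    have hc : 1 / (q ^ 2 - q) * q ≤ 1 + 1 / (q ^ 2 - q) := by
      rw [one_div_mul_eq_div, div_le_iff₀ hpos, add_mul, one_div_mul_cancel hpos.ne']
      nlinarith [sq_nonneg (q - 1)]
    rw [onesVal, lt_div_iff₀ hq0]
    linarith

theorem mem_expansions_onesVal_succ_iff (hq : 1 < q) (hφ : 1 < q ^ 2 - q) (m : ℕ) :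
    d ∈ expansions q (onesVal q (m + 2)) ↔
      ∃ e ∈ expansions q (onesVal q (m + 1)), d = prep 1 1 e := by
  have hstep : q * onesVal q (m + 2) - (1 : ℕ) = onesVal q (m + 1) := by
    rw [show onesVal q (m + 2) = (1 + onesVal q (m + 1)) / q from rfl]
    field_simp
    push_cast
    ring
  constructor
  · intro hd
    obtain ⟨s, hs, e, he, rfl⟩ := (mem_expansions_iff_prep hq).1 hd
    obtain rfl : s = 1 := by simpa using head_eq_one_of_lt hq (lt_onesVal hq hφ m) hd
    exact ⟨e, hstep ▸ he, rfl⟩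
  · rintro ⟨e, he, rfl⟩
    exact (prep_one_mem_expansions_iff hq le_rfl).2 (hstep ▸ he)

end Ones

section ExpansionsOfOne

variable {q : ℝ} {d : ℕ → ℕ}

theorem mem_expansions_onesVal_iff (hq : 1 < q) (hφ : 1 < q ^ 2 - q) (m : ℕ) :
    d ∈ expansions q (onesVal q (m + 1)) ↔ ∃ e ∈ expansions q (onesVal q 1), d = prep 1 m e := by
  induction m generalizing d with
  | zero => simp
  | succ m ih =>
    rw [mem_expansions_onesVal_succ_iff hq hφ]
    simp only [ih]
    constructor
    · rintro ⟨_, ⟨e, he, rfl⟩, rfl⟩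
      exact ⟨e, he, by rw [prep_prep, add_comm]⟩
    · rintro ⟨e, he, rfl⟩
      exact ⟨_, ⟨e, he, rfl⟩, by rw [prep_prep, add_comm]⟩

theorem mem_expansions_onesVal_one_iff (hq : 1 < q) :
    d ∈ expansions q (onesVal q 1) ↔
      (∃ e ∈ expansions q 1, d = prep 0 1 e) ∨ d = prep 1 1 0 := by
  have hval : ∀ s : ℕ, q * onesVal q 1 - s = 1 - s := fun s => by
    simp [onesVal, (zero_lt_one.trans hq).ne']
  rw [mem_expansions_iff_prep hq]
  simp only [hval]
  constructor
  · rintro ⟨s, hs, e, he, rfl⟩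
    obtain rfl | rfl : s = 0 ∨ s = 1 := by omega
    · exact Or.inl ⟨e, by simpa using he, rfl⟩
    · rw [Nat.cast_one, sub_self, expansions_zero hq] at he
      exact Or.inr (by rw [he])
  · rintro (⟨e, he, rfl⟩ | rfl)
    · exact ⟨0, zero_le_one, e, by simpa using he, rfl⟩
    · exact ⟨1, le_rfl, 0, by simp [expansions_zero hq], rfl⟩

theorem expansions_one_eq (hq : 1 < q) (hφ : 1 < q ^ 2 - q) {m : ℕ}
    (hroot : onesVal q (m + 1) = 1) :
    expansions q 1 =
      insert (prep 1 (m + 1) 0) ((fun e => prep 1 m (prep 0 1 e)) '' expansions q 1) := by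
  ext d
  conv_lhs => rw [← hroot]
  rw [mem_expansions_onesVal_iff hq hφ]
  simp only [mem_expansions_onesVal_one_iff hq, mem_insert_iff, mem_image]
  constructor
  · rintro ⟨_, ⟨e, he, rfl⟩ | rfl, rfl⟩
    · exact Or.inr ⟨e, he, rfl⟩
    · exact Or.inl prep_prep
  · rintro (rfl | ⟨e, he, rfl⟩)
    · exact ⟨_, Or.inr rfl, prep_prep.symm⟩
    · exact ⟨_, Or.inl ⟨e, he, rfl⟩, rfl⟩

theorem mk_expansions_one (hq : 1 < q) (hφ : 1 < q ^ 2 - q) {m : ℕ}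
    (hroot : onesVal q (m + 1) = 1) : #(expansions q 1) = ℵ₀ := by
  have hblock : ∀ (e : ℕ → ℕ) i, prep 1 m (prep 0 1 e) (i + 1 + m) = e i := fun e i => by
    rw [prep_apply_add, prep_apply_add]
  have hzero : ∀ e : ℕ → ℕ, prep 1 m (prep 0 1 e) m = 0 := fun e => by simp [prep]
  refine Set.mk_eq_aleph0_of_eq_insert_image (expansions_one_eq hq hφ hroot)
    (fun e e' h => funext fun i => by rw [← hblock e, ← hblock e', h]) ?_ ?_
  · rintro ⟨e, he⟩
    have : prep 1 m (prep 0 1 e) m = prep 1 (m + 1) 0 m := congrFun he m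
    rw [hzero, prep_apply_of_lt m.lt_succ_self] at this
    exact zero_ne_one this
  · intro e e' k hagree j hj
    obtain hjm | ⟨i, rfl⟩ : j < m ∨ ∃ i, j = i + m := by
      rcases lt_or_ge j m with h | h
      · exact Or.inl h
      · exact Or.inr ⟨j - m, by omega⟩
    · simp [hjm]
    · rcases i with _ | i
      · rw [zero_add, hzero, hzero]
      · rw [hblock, hblock]
        exact hagree i (by omega)

theorem mem_BalephSet_of_pow_mul (hq : 1 < q) (hφ : 1 < q ^ 2 - q) {n : ℕ}
    (hroot : q ^ n * (2 - q) = 1) : q ∈ BalephSet := by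
  have hq2 : q < 2 := by
    by_contra h
    have : q ^ n * (2 - q) ≤ 0 :=
      mul_nonpos_of_nonneg_of_nonpos (by positivity) (by linarith)
    linarith
  obtain _ | m := n
  · simp at hroot; linarith
  refine ⟨⟨hq, hq2⟩, 1, ⟨zero_le_one, ?_⟩,
    mk_expansions_one hq hφ (onesVal_eq_one_of_pow_mul hq hroot)⟩
  rw [le_div_iff₀ (by linarith)]
  linarith

theorem exists_pow_mul_eq_one {n : ℕ} (hn : 3 ≤ n) :
    ∃ q ∈ Icc (7 / 4 : ℝ) 2, q ^ n * (2 - q) = 1 := by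
  have hcont : ContinuousOn (fun q : ℝ => q ^ n * (2 - q)) (Icc (7 / 4) 2) := by fun_prop
  have hlow : (1 : ℝ) ≤ (7 / 4) ^ n * (2 - 7 / 4) := calc
    (1 : ℝ) ≤ (7 / 4) ^ 3 * (2 - 7 / 4) := by norm_num
    _ ≤ (7 / 4) ^ n * (2 - 7 / 4) := by gcongr; norm_num
  exact intermediate_value_Icc' (by norm_num) hcont ⟨by simp, hlow⟩

end ExpansionsOfOne

/-- `B_{ℵ₀}` is not a closed subset of `ℝ`. -/
theorem stmt2 : ¬ IsClosed BalephSet := by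
  intro hclosed
  have htwo : (2 : ℝ) ∈ closure BalephSet := by
    refine Metric.mem_closure_iff.2 fun ε hε => ?_
    obtain ⟨n, hn⟩ := exists_pow_lt_of_lt_one hε (by norm_num : (4 / 7 : ℝ) < 1)
    obtain ⟨q, ⟨hq74, hq2⟩, hroot⟩ := exists_pow_mul_eq_one (n := n + 3) (by omega)
    refine ⟨q, mem_BalephSet_of_pow_mul (by linarith) (by nlinarith) hroot, ?_⟩
    calc dist 2 q = (q ^ (n + 3))⁻¹ := by
          rw [Real.dist_eq, abs_of_nonneg (by linarith), eq_inv_of_mul_eq_one_right hroot]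
      _ ≤ ((7 / 4) ^ (n + 3))⁻¹ := by gcongr
      _ = (4 / 7) ^ (n + 3) := by rw [← inv_pow, inv_div]
      _ ≤ (4 / 7) ^ n := pow_le_pow_of_le_one (by norm_num) (by norm_num) (by omega)
      _ < ε := hn
  exact lt_irrefl _ (hclosed.closure_eq ▸ htwo).1.2
end

section
/- For x ∈ [0, 1/(q_2−1)]: x is a q_2-null infinite point if and only if 1/(q_2−1) − x is a q_2-null infinite point. -/
open Set

/-! Reflecting every digit, `d ↦ 1 - d`, maps the `q`-expansions of `x` bijectively onto those of
`1/(q-1) - x`, and conjugates `T_{q,s}` to `T_{q,1-s}`. The switch region is symmetric about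
`1/(2(q-1))`, so reflection preserves `A₂(q)` and `A₃(q)`, and the branching points of
`1/(q-1) - x` are exactly the reflections of those of `x`. -/

section Reflection

variable {q : ℝ}

lemma hasSum_one_div_pow_succ (hq : 1 < q) :
    HasSum (fun i : ℕ => 1 / q ^ (i + 1)) (1 / (q - 1)) := by
  have hq0 : 0 < q := one_pos.trans hq
  have hterm : (fun i : ℕ => 1 / q ^ (i + 1)) = fun i => q⁻¹ * q⁻¹ ^ i := by
    funext i
    rw [pow_succ', one_div, mul_inv, inv_pow]
  have hsum : 1 / (q - 1) = q⁻¹ * (1 - q⁻¹)⁻¹ := by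
    have : q - 1 ≠ 0 := sub_ne_zero.2 hq.ne'
    field_simp
  rw [hterm, hsum]
  exact (hasSum_geometric_of_lt_one (inv_nonneg.2 hq0.le) (inv_lt_one_of_one_lt₀ hq)).mul_left _

lemma summable_expVal_terms (hq : 1 < q) {d : ℕ → ℕ} (hd : ∀ i, d i ≤ 1) :
    Summable (fun i : ℕ => (d i : ℝ) / q ^ (i + 1)) :=
  (hasSum_one_div_pow_succ hq).summable.of_nonneg_of_le (fun _ => by positivity)
    (fun i => div_le_div_of_nonneg_right (by exact_mod_cast hd i) (by positivity))

lemma reflSeq_le_one (d : ℕ → ℕ) (i : ℕ) : reflSeq d i ≤ 1 := Nat.sub_le 1 (d i)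

lemma reflSeq_reflSeq {d : ℕ → ℕ} (hd : ∀ i, d i ≤ 1) : reflSeq (reflSeq d) = d := by
  funext i
  have := hd i
  simp only [reflSeq]
  omega

lemma expVal_reflSeq (hq : 1 < q) {d : ℕ → ℕ} (hd : ∀ i, d i ≤ 1) :
    expVal q (reflSeq d) = 1 / (q - 1) - expVal q d := by
  have hterm : (fun i : ℕ => (reflSeq d i : ℝ) / q ^ (i + 1)) =
      fun i => 1 / q ^ (i + 1) - (d i : ℝ) / q ^ (i + 1) := by
    funext i
    rw [reflSeq, Nat.cast_sub (hd i), Nat.cast_one, sub_div]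
  rw [expVal, hterm]
  exact ((hasSum_one_div_pow_succ hq).sub (summable_expVal_terms hq hd).hasSum).tsum_eq

lemma reflSeq_mem_expansions (hq : 1 < q) {x : ℝ} {d : ℕ → ℕ} (h : d ∈ expansions q x) :
    reflSeq d ∈ expansions q (1 / (q - 1) - x) :=
  ⟨reflSeq_le_one d, by rw [expVal_reflSeq hq h.1, h.2]⟩

lemma expansions_reflect (hq : 1 < q) (x : ℝ) :
    expansions q (1 / (q - 1) - x) = reflSeq '' expansions q x := by
  refine Set.Subset.antisymm (fun e he => ⟨reflSeq e, ?_, reflSeq_reflSeq he.1⟩) ?_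
  · simpa using reflSeq_mem_expansions hq he
  · rintro _ ⟨d, hd, rfl⟩
    exact reflSeq_mem_expansions hq hd

lemma reflSeq_injOn (x : ℝ) : Set.InjOn reflSeq (expansions q x) := fun d hd e he h => by
  rw [← reflSeq_reflSeq hd.1, h, reflSeq_reflSeq he.1]

lemma finite_expansions_reflect_iff (hq : 1 < q) (x : ℝ) :
    (expansions q (1 / (q - 1) - x)).Finite ↔ (expansions q x).Finite := by
  rw [expansions_reflect hq, Set.finite_image_iff (reflSeq_injOn x)]

lemma Tmap_reflect (hq : 1 < q) {s : ℕ} (hs : s ≤ 1) (y : ℝ) :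
    Tmap q s (1 / (q - 1) - y) = 1 / (q - 1) - Tmap q (1 - s) y := by
  have : q - 1 ≠ 0 := sub_ne_zero.2 hq.ne'
  interval_cases s <;> simp only [Tmap] <;> push_cast <;> field_simp <;> ring

lemma Tword_reflect (hq : 1 < q) {w : List ℕ} (hw : ∀ s ∈ w, s ≤ 1) (y : ℝ) :
    Tword q w (1 / (q - 1) - y) = 1 / (q - 1) - Tword q (w.map (1 - ·)) y := by
  induction w with
  | nil => rfl
  | cons a w ih =>
    simp only [List.forall_mem_cons] at hw
    change Tmap q a (Tword q w _) = 1 / (q - 1) - Tmap q (1 - a) (Tword q (w.map (1 - ·)) y)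
    rw [ih hw.2, Tmap_reflect hq hw.1]

lemma reflect_mem_switchRegion_iff (hq : 1 < q) (y : ℝ) :
    1 / (q - 1) - y ∈ switchRegion q ↔ y ∈ switchRegion q := by
  have hq0 : q ≠ 0 := (one_pos.trans hq).ne'
  have hq1 : q - 1 ≠ 0 := sub_ne_zero.2 hq.ne'
  have hsum : 1 / q + 1 / (q ^ 2 - q) = 1 / (q - 1) := by
    rw [show q ^ 2 - q = q * (q - 1) by ring]
    field_simp
    ring
  simp only [switchRegion, Set.mem_Icc]
  constructor <;> rintro ⟨h1, h2⟩ <;> constructor <;> linarith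

lemma finite_expansions_Tmap_reflect_iff (hq : 1 < q) {s : ℕ} (hs : s ≤ 1) (y : ℝ) :
    (expansions q (Tmap q s (1 / (q - 1) - y))).Finite ↔
      (expansions q (Tmap q (1 - s) y)).Finite := by
  rw [Tmap_reflect hq hs, finite_expansions_reflect_iff hq]

lemma reflect_mem_A2set_iff (hq : 1 < q) (y : ℝ) :
    1 / (q - 1) - y ∈ A2set q ↔ y ∈ A2set q := by
  simp only [A2set, Set.mem_ofPred_eq, reflect_mem_switchRegion_iff hq,
    finite_expansions_Tmap_reflect_iff hq zero_le_one, finite_expansions_Tmap_reflect_iff hq le_rfl,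
    Nat.sub_zero, Nat.sub_self]
  exact and_congr_right fun _ => Iff.of_eq (xor_comm _ _)

lemma reflect_mem_A3set_iff (hq : 1 < q) (y : ℝ) :
    1 / (q - 1) - y ∈ A3set q ↔ y ∈ A3set q := by
  simp only [A3set, Set.mem_ofPred_eq, Set.Infinite, reflect_mem_switchRegion_iff hq,
    finite_expansions_Tmap_reflect_iff hq zero_le_one, finite_expansions_Tmap_reflect_iff hq le_rfl,
    and_comm, Nat.sub_zero, Nat.sub_self]

lemma IsNullInfinite.reflect (hq : 1 < q) {y : ℝ} (h : IsNullInfinite q y) :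
    IsNullInfinite q (1 / (q - 1) - y) := by
  refine ⟨?_, fun w hw hbranch => ?_⟩
  · exact (finite_expansions_reflect_iff hq y).not.2 h.1
  · have hw' : ∀ s ∈ w.map (1 - ·), s ≤ 1 := by
      simp only [List.mem_map]
      rintro _ ⟨s, -, rfl⟩
      exact Nat.sub_le 1 s
    rw [Tword_reflect hq hw, Set.mem_union, reflect_mem_A2set_iff hq,
      reflect_mem_A3set_iff hq] at hbranch
    rw [Tword_reflect hq hw, reflect_mem_A2set_iff hq]
    exact h.2 _ hw' hbranch

end Reflection

theorem stmt17_general (q2 : ℝ) (hq2 : q2 ∈ Set.Ioo (1 : ℝ) 2)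
    (x : ℝ) :
    IsNullInfinite q2 x ↔ IsNullInfinite q2 (1 / (q2 - 1) - x) := by
  refine ⟨IsNullInfinite.reflect hq2.1, fun h => ?_⟩
  simpa only [sub_sub_cancel] using h.reflect hq2.1

/-- `x ∈ [0, 1/(q₂-1)]` is a `q₂`-null infinite point iff `1/(q₂-1) - x` is. -/
theorem stmt17 (q2 : ℝ) (hq2 : q2 ∈ Set.Ioo (1 : ℝ) 2)
    (hq2r : q2 ^ 4 = 2 * q2 ^ 2 + q2 + 1)
    (x : ℝ) (hx : x ∈ Set.Icc (0 : ℝ) (1 / (q2 - 1))) :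
    IsNullInfinite q2 x ↔ IsNullInfinite q2 (1 / (q2 - 1) - x) :=
  stmt17_general q2 hq2 x
end
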